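/- Let p be a prime, p ≥ 3, and consider the cyclic group ℤ_p. For any j with 0 ≤ j ≤ (p−1)/2, there exists a labeling of the elements of ℤ_p by symbols from {x,y,z} using exactly p−2j labels x, j labels y, and j labels z, such that no element labeled z has its successor (addition of 1) labeled x, no element labeled z has z+2 labeled y, and no element labeled x has its successor labeled y. -/

import Mathlib

/-- A three-element set of labels. -/
inductive Lab | x | y | z
deriving DecidableEq

/-!
Read the labeling off the representatives `0, …, p - 1`: the first `2j` points alternate
`z, y, z, y, …` and the remaining `p - 2j ≥ 1` points are labeled `x`. Every `z` is followed by a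
`y` and two steps later by a `z` or an `x`; an `x` is followed by another `x`, except at the wrap
from `p - 1` to `0`, where a `z` (or, when `j = 0`, an `x`) follows.
-/

open Finset

lemma ZMod.card_filter_val {p : ℕ} [NeZero p] (P : ℕ → Prop) [DecidablePred P] :
    #{v : ZMod p | P v.val} = #{n ∈ range p | P n} := by
  refine Finset.card_nbij' ZMod.val Nat.cast ?_ ?_ ?_ ?_ <;> intro n hn
  · simp_all [ZMod.val_lt]
  · simp_all [ZMod.val_natCast, Nat.mod_eq_of_lt]
  · simp
  · simp_all [ZMod.val_natCast, Nat.mod_eq_of_lt]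

def zigzag (m n : ℕ) : Lab :=
  if n < 2 * m then if n % 2 = 0 then .z else .y else .x

section zigzag

variable {m n p : ℕ}

lemma zigzag_eq_z_iff : zigzag m n = .z ↔ n < 2 * m ∧ n % 2 = 0 := by
  unfold zigzag; split_ifs <;> simp_all

lemma zigzag_eq_y_iff : zigzag m n = .y ↔ n < 2 * m ∧ n % 2 = 1 := by
  unfold zigzag; split_ifs <;> simp_all

lemma zigzag_eq_x_iff : zigzag m n = .x ↔ 2 * m ≤ n := by
  unfold zigzag; split_ifs <;> simp_all

lemma card_filter_zigzag_eq_x : #{n ∈ range p | zigzag m n = .x} = p - 2 * m := by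
  have : {n ∈ range p | zigzag m n = .x} = Ico (2 * m) p := by
    ext n; simp only [mem_filter, mem_range, mem_Ico, zigzag_eq_x_iff]; omega
  rw [this, Nat.card_Ico]

lemma card_filter_zigzag_eq_z (hm : 2 * m ≤ p) : #{n ∈ range p | zigzag m n = .z} = m := by
  have : {n ∈ range p | zigzag m n = .z} = (range m).image (2 * ·) := by
    ext n
    simp only [mem_filter, mem_range, mem_image, zigzag_eq_z_iff]
    constructor
    · rintro ⟨-, hn, hev⟩; exact ⟨n / 2, by omega, by omega⟩
    · rintro ⟨k, hk, rfl⟩; omega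
  rw [this, card_image_of_injective _ fun a b (h : 2 * a = 2 * b) => by omega, card_range]

lemma card_filter_zigzag_eq_y (hm : 2 * m ≤ p) : #{n ∈ range p | zigzag m n = .y} = m := by
  have : {n ∈ range p | zigzag m n = .y} = (range m).image (2 * · + 1) := by
    ext n
    simp only [mem_filter, mem_range, mem_image, zigzag_eq_y_iff]
    constructor
    · rintro ⟨-, hn, hodd⟩; exact ⟨n / 2, by omega, by omega⟩
    · rintro ⟨k, hk, rfl⟩; omega
  rw [this, card_image_of_injective _ fun a b (h : 2 * a + 1 = 2 * b + 1) => by omega, card_range]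

lemma zigzag_succ_mod_of_eq_z (hm : 2 * m < p) (h : zigzag m n = .z) :
    zigzag m ((n + 1) % p) = .y := by
  rw [zigzag_eq_z_iff] at h
  rw [Nat.mod_eq_of_lt (by omega), zigzag_eq_y_iff]
  omega

lemma zigzag_add_two_mod_ne_y_of_eq_z (hm : 2 * m < p) (h : zigzag m n = .z) :
    zigzag m ((n + 2) % p) ≠ .y := by
  rw [zigzag_eq_z_iff] at h
  rw [Nat.mod_eq_of_lt (by omega), Ne, zigzag_eq_y_iff]
  omega

lemma zigzag_succ_mod_ne_y_of_eq_x (hn : n < p) (h : zigzag m n = .x) :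
    zigzag m ((n + 1) % p) ≠ .y := by
  rw [zigzag_eq_x_iff] at h
  rw [Ne, zigzag_eq_y_iff]
  rcases (Nat.add_one_le_of_lt hn).lt_or_eq with hlt | heq
  · rw [Nat.mod_eq_of_lt hlt]; omega
  · rw [heq, Nat.mod_self]; omega

end zigzag

theorem stmt5_general (p : ℕ) [NeZero p]
    (j : ℕ) (hj : j ≤ (p - 1) / 2) :
    ∃ ℓ : ZMod p → Lab,
      (Finset.univ.filter fun v => ℓ v = Lab.x).card = p - 2 * j ∧
      (Finset.univ.filter fun v => ℓ v = Lab.y).card = j ∧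
      (Finset.univ.filter fun v => ℓ v = Lab.z).card = j ∧
      (∀ v : ZMod p, ¬(ℓ v = Lab.z ∧ ℓ (v + 1) = Lab.x)) ∧
      (∀ v : ZMod p, ¬(ℓ v = Lab.z ∧ ℓ (v + 2) = Lab.y)) ∧
      (∀ v : ZMod p, ¬(ℓ v = Lab.x ∧ ℓ (v + 1) = Lab.y)) := by
  have hjp : 2 * j < p := by have := NeZero.pos p; omega
  have val_add_one (v : ZMod p) : (v + 1).val = (v.val + 1) % p := by
    rw [ZMod.val_add, ZMod.val_one_eq_one_mod, Nat.add_mod_mod]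
  have val_add_two (v : ZMod p) : (v + 2).val = (v.val + 2) % p := by
    rw [ZMod.val_add, ZMod.val_two_eq_two_mod, Nat.add_mod_mod]
  refine ⟨fun v => zigzag j v.val, ?_, ?_, ?_, ?_, ?_, ?_⟩
  · rw [ZMod.card_filter_val (zigzag j · = .x), card_filter_zigzag_eq_x]
  · rw [ZMod.card_filter_val (zigzag j · = .y), card_filter_zigzag_eq_y hjp.le]
  · rw [ZMod.card_filter_val (zigzag j · = .z), card_filter_zigzag_eq_z hjp.le]
  · rintro v ⟨hz, hx⟩
    dsimp only at hx
    rw [val_add_one, zigzag_succ_mod_of_eq_z hjp hz] at hx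
    cases hx
  · rintro v ⟨hz, hy⟩
    exact zigzag_add_two_mod_ne_y_of_eq_z hjp hz (val_add_two v ▸ hy)
  · rintro v ⟨hx, hy⟩
    exact zigzag_succ_mod_ne_y_of_eq_x (ZMod.val_lt v) hx (val_add_one v ▸ hy)

theorem stmt5 (p : ℕ) [NeZero p] (hp : p.Prime) (hp3 : 3 ≤ p)
    (j : ℕ) (hj : j ≤ (p - 1) / 2) :
    ∃ ℓ : ZMod p → Lab,
      (Finset.univ.filter fun v => ℓ v = Lab.x).card = p - 2 * j ∧
      (Finset.univ.filter fun v => ℓ v = Lab.y).card = j ∧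
      (Finset.univ.filter fun v => ℓ v = Lab.z).card = j ∧
      (∀ v : ZMod p, ¬(ℓ v = Lab.z ∧ ℓ (v + 1) = Lab.x)) ∧
      (∀ v : ZMod p, ¬(ℓ v = Lab.z ∧ ℓ (v + 2) = Lab.y)) ∧
      (∀ v : ZMod p, ¬(ℓ v = Lab.x ∧ ℓ (v + 1) = Lab.y)) :=
  stmt5_general p j hj
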